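/- arXiv:1405.1150 — 2 statements merged into one kernel-verified Lean document; each statement's English description precedes it below -/
import Mathlib

section
/- The principal congruence subgroup Γ(2) ⊆ SL₂(ℤ) preserves the mod-2 reduction of primitive vectors: if v, w ∈ ℤ² are primitive vectors and there exists M ∈ Γ(2) with Mv = w, then v ≡ w (mod 2). Conversely, if v and w are primitive vectors with v ≡ w (mod 2), then there exists M ∈ Γ(2) with Mv = w. -/
/-!
If `M ≡ 1`, then `Mv ≡ v`. Conversely, complete `v` and `w` to matrices `[v | u]` and `[w | u']`
of determinant one; then `M = [w | u'] [v | u]⁻¹` sends `v` to `w`, and `M ≡ 1` once `u ≡ u'`.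
Two completions of the same vector differ by a multiple of it, `u' = u + det[u' | u] • v`, so
replacing `u'` by `u' + det[u | u'] • w` achieves `u ≡ u'` without changing `det[w | u']`.
Nothing here is special to reduction mod 2: any ring homomorphism will do.
-/

namespace Matrix

variable {R S : Type*} [CommRing R] [CommRing S]

def ofCols₂ (v u : Fin 2 → R) : Matrix (Fin 2) (Fin 2) R :=
  !![v 0, u 0; v 1, u 1]

lemma det_ofCols₂ (v u : Fin 2 → R) : (ofCols₂ v u).det = v 0 * u 1 - u 0 * v 1 :=
  det_fin_two_of ..

lemma ofCols₂_mulVec_single_zero (v u : Fin 2 → R) : ofCols₂ v u *ᵥ Pi.single 0 1 = v := by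
  ext i; fin_cases i <;> simp [ofCols₂]

lemma map_ofCols₂ (f : R →+* S) (v u : Fin 2 → R) :
    (ofCols₂ v u).map f = ofCols₂ (f ∘ v) (f ∘ u) := by
  ext i j; fin_cases i <;> fin_cases j <;> simp [ofCols₂]

lemma exists_det_ofCols₂_eq_one {v : Fin 2 → R} (hv : IsCoprime (v 0) (v 1)) :
    ∃ u, (ofCols₂ v u).det = 1 := by
  obtain ⟨a, b, hab⟩ := hv
  refine ⟨![-b, a], ?_⟩
  rw [det_ofCols₂]
  simp only [cons_val_zero, cons_val_one, cons_val_fin_one]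
  linear_combination hab

lemma eq_add_det_smul_of_det_ofCols₂_eq_one {v u u' : Fin 2 → R}
    (hu : (ofCols₂ v u).det = 1) (hu' : (ofCols₂ v u').det = 1) :
    u' = u + (ofCols₂ u' u).det • v := by
  rw [det_ofCols₂] at hu hu' ⊢
  ext i
  fin_cases i <;> simp only [Fin.zero_eta, Fin.mk_one, Pi.add_apply, Pi.smul_apply, smul_eq_mul]
  · linear_combination u 0 * hu' - u' 0 * hu
  · linear_combination u 1 * hu' - u' 1 * hu

lemma exists_det_ofCols₂_eq_one_and_map_eq (f : R →+* S) {v w : Fin 2 → R}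
    (hv : IsCoprime (v 0) (v 1)) (hw : IsCoprime (w 0) (w 1)) (hvw : f ∘ v = f ∘ w) :
    ∃ u u', (ofCols₂ v u).det = 1 ∧ (ofCols₂ w u').det = 1 ∧ f ∘ u = f ∘ u' := by
  obtain ⟨u, hu⟩ := exists_det_ofCols₂_eq_one hv
  obtain ⟨u', hu'⟩ := exists_det_ofCols₂_eq_one hw
  have map_det (x y : Fin 2 → R) : f (ofCols₂ x y).det = (ofCols₂ (f ∘ x) (f ∘ y)).det := by
    rw [RingHom.map_det, RingHom.mapMatrix_apply, map_ofCols₂]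
  refine ⟨u, u' + (ofCols₂ u u').det • w, hu, ?_, ?_⟩
  · rw [det_ofCols₂] at hu' ⊢
    simp only [Pi.add_apply, Pi.smul_apply, smul_eq_mul]
    linear_combination hu'
  · have hfu : (ofCols₂ (f ∘ v) (f ∘ u)).det = 1 := by rw [← map_det, hu, map_one]
    have hfu' : (ofCols₂ (f ∘ v) (f ∘ u')).det = 1 := by rw [hvw, ← map_det, hu', map_one]
    rw [eq_add_det_smul_of_det_ofCols₂_eq_one hfu' hfu, ← map_det, hvw]
    ext i
    simp

namespace SpecialLinearGroup

lemma exists_mem_ker_map_smul_eq (f : R →+* S) {v w : Fin 2 → R}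
    (hv : IsCoprime (v 0) (v 1)) (hw : IsCoprime (w 0) (w 1)) (hvw : f ∘ v = f ∘ w) :
    ∃ M ∈ (map (n := Fin 2) f).ker, M • v = w := by
  obtain ⟨u, u', hu, hu', huu'⟩ := exists_det_ofCols₂_eq_one_and_map_eq f hv hw hvw
  let A : SpecialLinearGroup (Fin 2) R := ⟨ofCols₂ v u, hu⟩
  let B : SpecialLinearGroup (Fin 2) R := ⟨ofCols₂ w u', hu'⟩
  have hAB : map f A = map f B := Subtype.ext <| by
    change f.mapMatrix (ofCols₂ v u) = f.mapMatrix (ofCols₂ w u')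
    rw [RingHom.mapMatrix_apply, RingHom.mapMatrix_apply, map_ofCols₂, map_ofCols₂, hvw, huu']
  have hA : A • Pi.single 0 1 = v := ofCols₂_mulVec_single_zero v u
  refine ⟨B * A⁻¹, by rw [MonoidHom.mem_ker, map_mul, map_inv, hAB, mul_inv_cancel], ?_⟩
  rw [mul_smul, ← hA, inv_smul_smul]
  exact ofCols₂_mulVec_single_zero w u'

lemma map_comp_smul_of_mem_ker_map {n : Type*} [Fintype n] [DecidableEq n] (f : R →+* S)
    {M : SpecialLinearGroup n R} (hM : M ∈ (map f).ker) (v : n → R) :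
    f ∘ (M • v) = f ∘ v := by
  have hM1 : f.mapMatrix (M : Matrix n n R) = 1 :=
    congrArg (fun N : SpecialLinearGroup n S => (N : Matrix n n S)) (MonoidHom.mem_ker.mp hM)
  ext i
  change f (((M : Matrix n n R) *ᵥ v) i) = f (v i)
  rw [RingHom.map_mulVec, ← RingHom.mapMatrix_apply, hM1, one_mulVec, Function.comp_apply]

theorem exists_mem_ker_map_smul_eq_iff (f : R →+* S) {v w : Fin 2 → R}
    (hv : IsCoprime (v 0) (v 1)) (hw : IsCoprime (w 0) (w 1)) :
    (∃ M ∈ (map (n := Fin 2) f).ker, M • v = w) ↔ f ∘ v = f ∘ w :=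
  ⟨fun ⟨_, hM, hMv⟩ => hMv ▸ (map_comp_smul_of_mem_ker_map f hM v).symm,
    exists_mem_ker_map_smul_eq f hv hw⟩

end SpecialLinearGroup

end Matrix

/-- `Γ(2)` preserves the mod 2 reduction of primitive vectors, and conversely acts
transitively on primitive vectors with the same mod 2 reduction. -/
theorem gamma_two_orbit_iff_mod_two (v w : Fin 2 → ℤ)
    (hv : IsCoprime (v 0) (v 1)) (hw : IsCoprime (w 0) (w 1)) :
    (∃ M ∈ (Matrix.SpecialLinearGroup.map (n := Fin 2) (Int.castRingHom (ZMod 2))).ker,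
        Matrix.mulVec (M : Matrix (Fin 2) (Fin 2) ℤ) v = w) ↔
      (∀ i, (v i : ZMod 2) = (w i : ZMod 2)) :=
  (Matrix.SpecialLinearGroup.exists_mem_ker_map_smul_eq_iff _ hv hw).trans funext_iff
end

section
/- Let θ₁, …, θₙ be real numbers such that the only ℚ-linear relation among θ₁, …, θₙ, π is a scalar multiple of θ₁ + ⋯ + θₙ = (n−2)π (n ≥ 3). Then the n−1 real numbers θ₁ − θ₂, θ₁ − θ₃, …, θ₁ − θₙ together with π are linearly independent over ℚ; consequently the subgroup of ℝ/2πℤ generated by the elements θ₁ − θᵢ (i = 2,…,n) is free abelian of rank n − 1. -/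
/-!
A rational relation `∑ gᵢ (θ₀ − θᵢ) + c π = 0` among the differences is a relation among
`θ₀, …, θₙ, π` whose `θ`-coefficients `∑ gᵢ, −g₁, …, −gₙ` sum to zero. Every relation has all its
`θ`-coefficients equal, to `t` say, so `(n + 1) t = 0`; hence `t = 0`, and then all `gᵢ` and `c`
vanish. A `ℤ`-relation among the differences in `ℝ/2πℤ` lifts to a `ℚ`-relation with `π` in `ℝ`,
so the differences are `ℤ`-independent in the circle and span a free abelian group of rank `n`.
-/

theorem linearIndependent_cons_sub_of_relations {n : ℕ} {θ : Fin (n + 1) → ℝ} {p : ℝ} {c : ℚ}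
    (h : ∀ (q : Fin (n + 1) → ℚ) (q' : ℚ), (∑ i, (q i : ℝ) * θ i) + (q' : ℝ) * p = 0 →
      ∃ t : ℚ, (∀ i, q i = t) ∧ q' = -t * c) :
    LinearIndependent ℚ (Fin.cons p (fun i : Fin n => θ 0 - θ i.succ) : Fin (n + 1) → ℝ) := by
  rw [Fintype.linearIndependent_iff]
  intro g hg
  set q : Fin (n + 1) → ℚ := Fin.cons (∑ i : Fin n, g i.succ) (fun i => -g i.succ)
  have hq : (∑ i, (q i : ℝ) * θ i) + (g 0 : ℝ) * p = 0 := by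
    rw [← hg, Fin.sum_univ_succ, Fin.sum_univ_succ]
    simp only [q, Fin.cons_zero, Fin.cons_succ, Rat.cast_sum, Rat.cast_neg, Finset.sum_mul,
      Rat.smul_def, mul_sub, Finset.sum_sub_distrib, neg_mul, Finset.sum_neg_distrib]
    ring
  obtain ⟨t, hqt, hgt⟩ := h q (g 0) hq
  have hg_succ (i : Fin n) : g i.succ = -t := by simpa [q] using congrArg Neg.neg (hqt i.succ)
  have ht : t = 0 := by
    have h0 : ∑ i : Fin n, g i.succ = t := hqt 0
    simp only [hg_succ, Finset.sum_const, Finset.card_univ, Fintype.card_fin, nsmul_eq_mul] at h0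
    have : ((n : ℚ) + 1) * t = 0 := by linarith
    exact (mul_eq_zero.mp this).resolve_left (by positivity)
  intro i
  refine Fin.cases ?_ (fun j => ?_) i
  · rw [hgt, ht, neg_zero, zero_mul]
  · rw [hg_succ, ht, neg_zero]

theorem AddCircle.linearIndependent_int_coe {n : ℕ} {T p : ℝ} {r : ℚ} (hT : T = r * p)
    {x : Fin n → ℝ} (h : LinearIndependent ℚ (Fin.cons p x : Fin (n + 1) → ℝ)) :
    LinearIndependent ℤ (fun i => (x i : AddCircle T)) := by
  rw [Fintype.linearIndependent_iff]
  intro g hg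
  have hcoe : ((∑ i, g i • x i : ℝ) : AddCircle T) = 0 := by
    rw [← hg, ← QuotientAddGroup.mk'_apply, map_sum]
    simp only [QuotientAddGroup.mk'_apply, AddCircle.coe_zsmul]
  obtain ⟨k, hk⟩ := (AddCircle.coe_eq_zero_iff T).mp hcoe
  have hsum : ∑ i, (g i : ℝ) * x i = ((k * r : ℚ) : ℝ) * p := by
    calc ∑ i, (g i : ℝ) * x i = ∑ i, g i • x i := by simp only [zsmul_eq_mul]
      _ = k • T := hk.symm
      _ = ((k * r : ℚ) : ℝ) * p := by rw [hT, zsmul_eq_mul]; push_cast; ring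
  have hrel := Fintype.linearIndependent_iff.mp h (Fin.cons (-(k * r)) fun i => (g i : ℚ)) (by
    simp only [Fin.sum_univ_succ, Fin.cons_zero, Fin.cons_succ, Rat.smul_def, Rat.cast_intCast,
      hsum]
    push_cast
    ring)
  intro i
  simpa using hrel i.succ

noncomputable def LinearIndependent.addEquivClosureRange {ι M : Type*} [Fintype ι]
    [AddCommGroup M] {v : ι → M} (hv : LinearIndependent ℤ v) :
    AddSubgroup.closure (Set.range v) ≃+ (ι → ℤ) :=
  (AddEquiv.addSubgroupCongr (Submodule.span_int_eq_addSubgroupClosure _).symm).trans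
    (Module.Basis.span hv).equivFun.toAddEquiv

theorem angle_differences_linear_independent_general (n : ℕ) (θ : Fin (n + 1) → ℝ)
    (h : ∀ (q : Fin (n + 1) → ℚ) (q' : ℚ),
      (∑ i, (q i : ℝ) * θ i) + (q' : ℝ) * Real.pi = 0 →
      ∃ t : ℚ, (∀ i, q i = t) ∧ q' = -t * ((n : ℚ) + 1 - 2)) :
    LinearIndependent ℚ
        (Fin.cons Real.pi (fun i : Fin n => θ 0 - θ i.succ) : Fin (n + 1) → ℝ) ∧
      Nonempty ((AddSubgroup.closure
          (Set.range fun i : Fin n =>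
            ((θ 0 - θ i.succ : ℝ) : AddCircle (2 * Real.pi)))) ≃+ (Fin n → ℤ)) := by
  have hℚ := linearIndependent_cons_sub_of_relations h
  have hℤ := AddCircle.linearIndependent_int_coe (r := 2) (by push_cast; rfl) hℚ
  exact ⟨hℚ, ⟨hℤ.addEquivClosureRange⟩⟩

/-- If the only `ℚ`-linear relation among `θ₁, …, θ_{n+1}, π` is a multiple of
`θ₁ + ⋯ + θ_{n+1} = (n−1)π` (so the polygon has `n+1 ≥ 3` vertices), then the `n` numbers
`θ₁ − θᵢ` (`i = 2, …, n+1`) together with `π` are linearly independent over `ℚ`, and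
the subgroup of `ℝ/2πℤ` generated by the `θ₁ − θᵢ` is free abelian of rank `n`. -/
theorem angle_differences_linear_independent (n : ℕ) (hn : 2 ≤ n) (θ : Fin (n + 1) → ℝ)
    (h : ∀ (q : Fin (n + 1) → ℚ) (q' : ℚ),
      (∑ i, (q i : ℝ) * θ i) + (q' : ℝ) * Real.pi = 0 →
      ∃ t : ℚ, (∀ i, q i = t) ∧ q' = -t * ((n : ℚ) + 1 - 2)) :
    LinearIndependent ℚ
        (Fin.cons Real.pi (fun i : Fin n => θ 0 - θ i.succ) : Fin (n + 1) → ℝ) ∧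
      Nonempty ((AddSubgroup.closure
          (Set.range fun i : Fin n =>
            ((θ 0 - θ i.succ : ℝ) : AddCircle (2 * Real.pi)))) ≃+ (Fin n → ℤ)) :=
  angle_differences_linear_independent_general n θ h
end
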